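/- Let Λ be a finite subset of ℤ^d, L ≥ 1 an integer, and suppose Λ is partitioned into at least two clusters such that any two distinct clusters C, C' satisfy dist(C, C') ≥ 4·max(diam(C), diam(C'), L). Let C₀, C₁ be two clusters minimizing the pairwise distance between distinct clusters, with diam(C₀) ≥ diam(C₁). Then there exists a translate T(C₁) = C₁ + u of C₁ by a vector u ∈ ℤ^d such that: (a) dist(C₀, T(C₁)) ≤ diam(C₀) + diam(C₁) + d (so the separation condition fails for the pair (C₀, T(C₁))); (b) for every cluster C ∉ {C₀, C₁}, dist(C, T(C₁)) ≥ diam(C) + diam(C₁); and (c) for every cluster C ≠ C₁, dist(C, T(C₁)) ≤ 2·dist(C, C₁). -/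

import Mathlib

/-! Translate `C₁` by `x₀ - x₁`, where `x₀ ∈ C₀` and `x₁ ∈ C₁` realise `dist(C₀, C₁)`, so that the
translate touches `C₀`. Every point moves by `dist(C₀, C₁)`, which by minimality is at most
`dist(C, C₁)`; this gives (c). The translate contains `x₀`, so it lies within `diam C₁` of `C₀`, and
the separation of `C` from `C₀` leaves room for (b). -/

/-- ℓ¹ norm of a point of `ℤ^d`, as a natural number. -/
def l1norm {d : ℕ} (x : Fin d → ℤ) : ℕ := ∑ i, (x i).natAbs

/-- ℓ¹ diameter of a finite subset of `ℤ^d`. -/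
def l1diam {d : ℕ} (C : Finset (Fin d → ℤ)) : ℕ :=
  C.sup fun x => C.sup fun y => l1norm (x - y)

/-- ℓ¹ distance between two subsets of `ℤ^d`. -/
noncomputable def setDist {d : ℕ} (C C' : Finset (Fin d → ℤ)) : ℕ :=
  sInf {k : ℕ | ∃ x ∈ C, ∃ y ∈ C', l1norm (x - y) = k}

section

variable {d : ℕ}

lemma l1norm_add_le (x y : Fin d → ℤ) : l1norm (x + y) ≤ l1norm x + l1norm y := by
  unfold l1norm
  rw [← Finset.sum_add_distrib]
  exact Finset.sum_le_sum fun i _ => Int.natAbs_add_le _ _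

lemma l1norm_sub_le_add (x y z : Fin d → ℤ) :
    l1norm (x - z) ≤ l1norm (x - y) + l1norm (y - z) := by
  simpa using l1norm_add_le (x - y) (y - z)

lemma l1norm_sub_self (x : Fin d → ℤ) : l1norm (x - x) = 0 := by
  simp [l1norm]

lemma l1norm_le_l1diam {C : Finset (Fin d → ℤ)} {x y : Fin d → ℤ}
    (hx : x ∈ C) (hy : y ∈ C) : l1norm (x - y) ≤ l1diam C :=
  (Finset.le_sup (f := fun z => l1norm (x - z)) hy).trans
    (Finset.le_sup (f := fun a => C.sup fun z => l1norm (a - z)) hx)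

lemma l1diam_image_add (C : Finset (Fin d → ℤ)) (u : Fin d → ℤ) :
    l1diam (C.image (· + u)) = l1diam C := by
  simp only [l1diam, Finset.sup_image, Function.comp_def, add_sub_add_right_eq_sub]

lemma setDist_le_l1norm {C C' : Finset (Fin d → ℤ)} {x y : Fin d → ℤ}
    (hx : x ∈ C) (hy : y ∈ C') : setDist C C' ≤ l1norm (x - y) :=
  Nat.sInf_le ⟨x, hx, y, hy, rfl⟩

lemma exists_l1norm_eq_setDist {C C' : Finset (Fin d → ℤ)}
    (hC : C.Nonempty) (hC' : C'.Nonempty) :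
    ∃ x ∈ C, ∃ y ∈ C', l1norm (x - y) = setDist C C' := by
  obtain ⟨x, hx⟩ := hC
  obtain ⟨y, hy⟩ := hC'
  exact Nat.sInf_mem (s := {k | ∃ x ∈ C, ∃ y ∈ C', l1norm (x - y) = k})
    ⟨l1norm (x - y), x, hx, y, hy, rfl⟩

lemma setDist_eq_zero_of_mem {C C' : Finset (Fin d → ℤ)} {x : Fin d → ℤ}
    (hx : x ∈ C) (hx' : x ∈ C') : setDist C C' = 0 :=
  Nat.eq_zero_of_le_zero ((setDist_le_l1norm hx hx').trans (l1norm_sub_self x).le)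

lemma setDist_image_add_le {C C' : Finset (Fin d → ℤ)} (hC : C.Nonempty) (hC' : C'.Nonempty)
    (u : Fin d → ℤ) : setDist C (C'.image (· + u)) ≤ setDist C C' + l1norm u := by
  obtain ⟨y, hy, z, hz, hyz⟩ := exists_l1norm_eq_setDist hC hC'
  calc setDist C (C'.image (· + u))
      ≤ l1norm (y - (z + u)) := setDist_le_l1norm hy (Finset.mem_image_of_mem _ hz)
    _ ≤ l1norm (y - z) + l1norm (z - (z + u)) := l1norm_sub_le_add _ _ _
    _ = setDist C C' + l1norm u := by
      rw [hyz, sub_add_cancel_left]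
      simp [l1norm]

lemma setDist_le_setDist_add_l1diam {A B C : Finset (Fin d → ℤ)} {x : Fin d → ℤ}
    (hxA : x ∈ A) (hxB : x ∈ B) (hC : C.Nonempty) :
    setDist C A ≤ setDist C B + l1diam B := by
  obtain ⟨y, hy, w, hw, hyw⟩ := exists_l1norm_eq_setDist hC ⟨x, hxB⟩
  calc setDist C A ≤ l1norm (y - x) := setDist_le_l1norm hy hxA
    _ ≤ l1norm (y - w) + l1norm (w - x) := l1norm_sub_le_add _ _ _
    _ ≤ setDist C B + l1diam B := by
      rw [hyw]
      exact Nat.add_le_add_left (l1norm_le_l1diam hw hxB) _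

end

theorem stmt6_general (d L : ℕ)
    (P : Finset (Finset (Fin d → ℤ)))
    (hne : ∀ C ∈ P, C.Nonempty)
    (hsep : ∀ C ∈ P, ∀ C' ∈ P, C ≠ C' →
      4 * max (max (l1diam C) (l1diam C')) L ≤ setDist C C')
    (C₀ C₁ : Finset (Fin d → ℤ)) (hC₀ : C₀ ∈ P) (hC₁ : C₁ ∈ P)
    (hmin : ∀ C ∈ P, ∀ C' ∈ P, C ≠ C' → setDist C₀ C₁ ≤ setDist C C')
    (hdiam : l1diam C₁ ≤ l1diam C₀) :
    ∃ u : Fin d → ℤ,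
      setDist C₀ (C₁.image (· + u)) ≤ l1diam C₀ + l1diam C₁ + d ∧
      (∀ C ∈ P, C ≠ C₀ → C ≠ C₁ →
        l1diam C + l1diam C₁ ≤ setDist C (C₁.image (· + u))) ∧
      (∀ C ∈ P, C ≠ C₁ →
        setDist C (C₁.image (· + u)) ≤ 2 * setDist C C₁) := by
  obtain ⟨x₀, hx₀, x₁, hx₁, hD⟩ := exists_l1norm_eq_setDist (hne C₀ hC₀) (hne C₁ hC₁)
  have hx₀T : x₀ ∈ C₁.image (· + (x₀ - x₁)) :=
    Finset.mem_image.2 ⟨x₁, hx₁, add_sub_cancel x₁ x₀⟩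
  refine ⟨x₀ - x₁, ?_, fun C hC hCC₀ _ => ?_, fun C hC hCC₁ => ?_⟩
  · rw [setDist_eq_zero_of_mem hx₀ hx₀T]
    exact Nat.zero_le _
  · have hback := setDist_le_setDist_add_l1diam hx₀ hx₀T (hne C hC)
    have hfar := hsep C hC C₀ hC₀ hCC₀
    rw [l1diam_image_add] at hback
    omega
  · have hmove := setDist_image_add_le (hne C hC) (hne C₁ hC₁) (x₀ - x₁)
    have hclosest := hmin C hC C₁ hC₁ hCC₁
    omega

/-- Moving one cluster: if `Λ ⊆ ℤ^d` is partitioned into at least two clusters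
satisfying the separation condition, and `C₀, C₁` are two distinct clusters of
minimal mutual distance with `diam C₀ ≥ diam C₁`, then there is a translate
`C₁ + u` of `C₁` such that (a) `dist(C₀, C₁+u) ≤ diam C₀ + diam C₁ + d`,
(b) every other cluster `C` satisfies `dist(C, C₁+u) ≥ diam C + diam C₁`, and
(c) every cluster `C ≠ C₁` satisfies `dist(C, C₁+u) ≤ 2 dist(C, C₁)`. -/
theorem stmt6 (d L : ℕ) (hL : 1 ≤ L) (Λ : Finset (Fin d → ℤ))
    (P : Finset (Finset (Fin d → ℤ)))
    (hne : ∀ C ∈ P, C.Nonempty)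
    (hdisj : ∀ C ∈ P, ∀ C' ∈ P, C ≠ C' → Disjoint C C')
    (hunion : P.biUnion id = Λ)
    (hcardP : 2 ≤ P.card)
    (hsep : ∀ C ∈ P, ∀ C' ∈ P, C ≠ C' →
      4 * max (max (l1diam C) (l1diam C')) L ≤ setDist C C')
    (C₀ C₁ : Finset (Fin d → ℤ)) (hC₀ : C₀ ∈ P) (hC₁ : C₁ ∈ P) (hne01 : C₀ ≠ C₁)
    (hmin : ∀ C ∈ P, ∀ C' ∈ P, C ≠ C' → setDist C₀ C₁ ≤ setDist C C')
    (hdiam : l1diam C₁ ≤ l1diam C₀) :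
    ∃ u : Fin d → ℤ,
      setDist C₀ (C₁.image (· + u)) ≤ l1diam C₀ + l1diam C₁ + d ∧
      (∀ C ∈ P, C ≠ C₀ → C ≠ C₁ →
        l1diam C + l1diam C₁ ≤ setDist C (C₁.image (· + u))) ∧
      (∀ C ∈ P, C ≠ C₁ →
        setDist C (C₁.image (· + u)) ≤ 2 * setDist C C₁) :=
  stmt6_general d L P hne hsep C₀ C₁ hC₀ hC₁ hmin hdiam
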